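/- arXiv:1607.05970 — 8 statements merged into one kernel-verified Lean document; each statement's English description precedes it below -/
import Mathlib

section
/- Let Σ₁, n₁ > 0 and m ∈ ℕ⁺, and set Σ₂ = Σ₁, n₂ = n₁ + m. Then (i) (Σ₁ + 0)/(n₁+1) ≥ Σ₂/n₂, and (ii) (Σ₂ + 1)/(n₂+1) > Σ₁/n₁ if and only if n₁ > (m+1)Σ₁. -/
theorem bernoulli_dominated_state (S₁ n₁ : ℝ) (m : ℕ) (hS : 0 < S₁) (hn : 0 < n₁)
    (hm : 1 ≤ m) :
    ((S₁ + 0) / (n₁ + 1) ≥ S₁ / (n₁ + m)) ∧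
    ((S₁ + 1) / ((n₁ + m) + 1) > S₁ / n₁ ↔ n₁ > (m + 1) * S₁) := by
  have hm' : (1 : ℝ) ≤ m := by exact_mod_cast hm
  have h1 : (0:ℝ) < n₁ + 1 := by linarith
  have h2 : (0:ℝ) < n₁ + m := by linarith
  have h3 : (0:ℝ) < n₁ + m + 1 := by linarith
  constructor
  · rw [ge_iff_le, div_le_div_iff₀ h2 h1]
    nlinarith
  · rw [gt_iff_lt, div_lt_div_iff₀ hn h3]
    constructor <;> intro h <;> nlinarith
end

section
/- In the two-armed Bernoulli MAB with Σ₂ = Σ₁, n₂ = n₁ + m, n₁ > (m+1)Σ₁, infinite horizon and discount factor γ, if γ/(1-γ) > m(n₁+m+1)/(n₁ - (m+1)Σ₁) then the KG score of arm 2 strictly exceeds the KG score of arm 1, i.e. μ₂ + (γ/(1-γ))·ν₂^{KG} > μ₁ + (γ/(1-γ))·ν₁^{KG}, so KG chooses the dominated arm 2. -/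
theorem kg_chooses_dominated_arm (S₁ n₁ γ : ℝ) (m : ℕ)
    (hS : 0 < S₁) (hn : 0 < n₁) (hm : 1 ≤ m)
    (hγ0 : 0 < γ) (hγ1 : γ < 1)
    (hcond : n₁ > (m + 1) * S₁)
    (hdisc : γ / (1 - γ) > m * (n₁ + m + 1) / (n₁ - (m + 1) * S₁))
    (S₂ n₂ : ℝ) (hS₂ : S₂ = S₁) (hn₂ : n₂ = n₁ + m) :
    S₂ / n₂ + (γ / (1 - γ)) * ((S₂ / n₂) * ((S₂ + 1) / (n₂ + 1) - S₁ / n₁)) >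
      S₁ / n₁ + (γ / (1 - γ)) * 0 := by
  subst hS₂ hn₂
  have hm' : (1 : ℝ) ≤ (m : ℝ) := by exact_mod_cast hm
  have hd : (0 : ℝ) < n₁ - (m + 1) * S₂ := by linarith
  have h1γ : (0 : ℝ) < 1 - γ := by linarith
  set H := γ / (1 - γ) with hH
  have hH0 : 0 < H := div_pos hγ0 h1γ
  have hkey : (m : ℝ) * (n₁ + m + 1) < H * (n₁ - (m + 1) * S₂) :=
    (div_lt_iff₀ hd).mp hdisc
  have hn2 : (0 : ℝ) < n₁ + m := by linarith
  have hn3 : (0 : ℝ) < n₁ + m + 1 := by linarith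
  clear_value H
  rw [gt_iff_lt, mul_zero, add_zero, ← sub_pos]
  have h1 : S₂ / (n₁ + ↑m) + H * (S₂ / (n₁ + ↑m) * ((S₂ + 1) / (n₁ + ↑m + 1) - S₂ / n₁))
      - S₂ / n₁ =
      (S₂ * (H * (n₁ - (m + 1) * S₂) - m * (n₁ + m + 1))) /
        (n₁ * (n₁ + m) * (n₁ + m + 1)) := by
    field_simp
    ring
  rw [h1]
  apply div_pos (mul_pos hS (by linarith)) (by positivity)
end

section
/- Let Ω ⊂ ℝ be bounded with minimum min Ω and maximum max Ω, min Ω < max Ω. Define Σ₁ = max Ω + 2 min Ω, n₁ = 3, Σ₂ = max Ω + 3 min Ω, n₂ = 4. Then (i) Σ₁/n₁ > Σ₂/n₂ and n₁ < n₂ (arm 1 dominates arm 2); (ii) (Σ₁ + min Ω)/(n₁+1) = Σ₂/n₂; and (iii) (Σ₂ + max Ω)/(n₂+1) > Σ₁/n₁. -/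
theorem kg_dominated_state_bounded (lo hi : ℝ) (hlt : lo < hi)
    (S₁ n₁ S₂ n₂ : ℝ)
    (hS₁ : S₁ = hi + 2 * lo) (hn₁ : n₁ = 3)
    (hS₂ : S₂ = hi + 3 * lo) (hn₂ : n₂ = 4) :
    (S₁ / n₁ > S₂ / n₂ ∧ n₁ < n₂) ∧
    (S₁ + lo) / (n₁ + 1) = S₂ / n₂ ∧
    (S₂ + hi) / (n₂ + 1) > S₁ / n₁ := by
  subst hS₁ hn₁ hS₂ hn₂
  refine ⟨⟨by nlinarith, by norm_num⟩, by ring, by nlinarith⟩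
end

section
/- With Ω bounded as above and state Σ₁ = max Ω + 2 min Ω, n₁ = 3, Σ₂' = Σ₂ + max Ω = 2 max Ω + 3 min Ω, n₂' = 5 (arm 2 after observing a maximal reward): (i) Σ₂'/n₂' > Σ₁/n₁; (ii) (Σ₂' + min Ω)/(n₂'+1) = Σ₁/n₁; and (iii) (Σ₁ + max Ω)/(n₁+1) > Σ₂'/n₂'. -/
theorem kg_not_stay_on_winner (lo hi : ℝ) (hlt : lo < hi)
    (S₁ n₁ S₂' n₂' : ℝ)
    (hS₁ : S₁ = hi + 2 * lo) (hn₁ : n₁ = 3)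
    (hS₂ : S₂' = 2 * hi + 3 * lo) (hn₂ : n₂' = 5) :
    S₂' / n₂' > S₁ / n₁ ∧
    (S₂' + lo) / (n₂' + 1) = S₁ / n₁ ∧
    (S₁ + hi) / (n₁ + 1) > S₂' / n₂' := by
  subst hS₁ hn₁ hS₂ hn₂
  refine ⟨by rw [gt_iff_lt, div_lt_div_iff₀] <;> nlinarith, by ring, by rw [gt_iff_lt, div_lt_div_iff₀] <;> nlinarith⟩
end

section
/- The Bernoulli KGI index ν_t^{KGI}(Σ,n,γ) = Σ/n + H·Σ(Σ+1)/((n+1)(n+HΣ)) (with H > 0 fixed) is strictly increasing in Σ for fixed n (0 < Σ < n), and ν_t^{KGI}(cΣ, cn, γ) is decreasing in c > 0 for fixed Σ, n. -/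
/-- The Bernoulli KGI index. -/
noncomputable def nuKGI (H S n : ℝ) : ℝ :=
  S / n + H * S * (S + 1) / ((n + 1) * (n + H * S))

/-! The index factors as `Σ/n + (Σ+1)/(n+1) · HΣ/(n+HΣ)`. For fixed `n` all three pieces
increase with `Σ`, the last two being positive. Under `(Σ, n) ↦ (cΣ, cn)` the first and last pieces are invariant,
while `(cΣ+1)/(cn+1)` decreases in `c` because it moves from `1` towards `Σ/n < 1`. -/

lemma div_add_self_lt_div_add_self {a x y : ℝ} (ha : 0 < a) (hx : 0 ≤ x) (hxy : x < y) :
    x / (a + x) < y / (a + y) := by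
  rw [div_lt_div_iff₀ (by linarith) (by linarith)]
  nlinarith

lemma add_one_div_add_one_lt_of_lt {a b c₁ c₂ : ℝ} (hab : a < b) (hb : 0 ≤ b) (hc₂ : 0 ≤ c₂)
    (hc : c₂ < c₁) : (c₁ * a + 1) / (c₁ * b + 1) < (c₂ * a + 1) / (c₂ * b + 1) := by
  rw [div_lt_div_iff₀ (by nlinarith) (by positivity)]
  nlinarith [mul_lt_mul_of_pos_left hab (sub_pos.2 hc)]

lemma nuKGI_eq (H S n : ℝ) :
    nuKGI H S n = S / n + (S + 1) / (n + 1) * (H * S / (n + H * S)) := by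
  unfold nuKGI
  rw [div_mul_div_comm, mul_comm (S + 1)]

lemma nuKGI_mul_mul {c : ℝ} (hc : c ≠ 0) (H S n : ℝ) :
    nuKGI H (c * S) (c * n) = S / n + (c * S + 1) / (c * n + 1) * (H * S / (n + H * S)) := by
  have hweight : H * (c * S) / (c * n + H * (c * S)) = H * S / (n + H * S) := by
    rw [mul_left_comm, ← mul_add, mul_div_mul_left _ _ hc]
  rw [nuKGI_eq, mul_div_mul_left _ _ hc, hweight]

lemma nuKGI_strictMonoOn {H n : ℝ} (hH : 0 < H) (hn : 0 < n) :
    StrictMonoOn (fun S => nuKGI H S n) (Set.Ioi 0) := by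
  intro S₁ (h₁ : 0 < S₁) S₂ (h₂ : 0 < S₂) h₁₂
  simp only [nuKGI_eq]
  have hratio : (S₁ + 1) / (n + 1) < (S₂ + 1) / (n + 1) := by gcongr
  have hweight : H * S₁ / (n + H * S₁) < H * S₂ / (n + H * S₂) :=
    div_add_self_lt_div_add_self hn (by positivity) (by gcongr)
  exact add_lt_add (by gcongr) (mul_lt_mul'' hratio hweight (by positivity) (by positivity))

lemma nuKGI_mul_mul_strictAntiOn {H S n : ℝ} (hH : 0 < H) (hS : 0 < S) (hSn : S < n) :
    StrictAntiOn (fun c => nuKGI H (c * S) (c * n)) (Set.Ioi 0) := by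
  intro c₂ (hc₂ : 0 < c₂) c₁ (hc₁ : 0 < c₁) hc
  simp only [nuKGI_mul_mul hc₁.ne', nuKGI_mul_mul hc₂.ne']
  have hweight : 0 < H * S / (n + H * S) := by
    have : 0 < n := hS.trans hSn
    positivity
  exact (add_lt_add_iff_left _).2
    (mul_lt_mul_of_pos_right (add_one_div_add_one_lt_of_lt hSn (hS.trans hSn).le hc₂.le hc) hweight)

theorem kgi_bernoulli_monotone (H n : ℝ) (hH : 0 < H) (hn : 0 < n) :
    (∀ S₁ S₂ : ℝ, 0 < S₁ → S₁ < S₂ → S₂ < n → nuKGI H S₁ n < nuKGI H S₂ n) ∧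
    (∀ S : ℝ, 0 < S → S < n →
      ∀ c₁ c₂ : ℝ, 0 < c₂ → c₂ < c₁ →
        nuKGI H (c₁ * S) (c₁ * n) < nuKGI H (c₂ * S) (c₂ * n)) := by
  refine ⟨fun S₁ S₂ h₁ h₁₂ _ => ?_, fun S hS hSn c₁ c₂ hc₂ hc => ?_⟩
  · exact nuKGI_strictMonoOn hH hn h₁ (h₁.trans h₁₂) h₁₂
  · exact nuKGI_mul_mul_strictAntiOn hH hS hSn hc₂ (hc₂.trans hc) hc
end

section
/- Suppose arm 1 dominates arm 2: Σ₁/n₁ > Σ₂/n₂ and n₁ < n₂ (all positive). If an index ν satisfies (a) ν(Σ,n) is increasing in Σ for fixed n, and (b) ν(cΣ,cn) is decreasing in c > 0 for fixed (Σ,n), then ν(Σ₁,n₁) ≥ ν(Σ₂,n₂). -/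
theorem index_never_dominated (ν : ℝ → ℝ → ℝ)
    (hmean : ∀ n : ℝ, 0 < n → ∀ S₁ S₂ : ℝ, S₁ ≤ S₂ → ν S₁ n ≤ ν S₂ n)
    (hscale : ∀ S n : ℝ, 0 < n → ∀ c₁ c₂ : ℝ, 0 < c₁ → c₁ ≤ c₂ →
      ν (c₂ * S) (c₂ * n) ≤ ν (c₁ * S) (c₁ * n))
    (S₁ n₁ S₂ n₂ : ℝ) (hS₁ : 0 < S₁) (hn₁ : 0 < n₁) (hS₂ : 0 < S₂) (hn₂ : 0 < n₂)
    (hdom₁ : S₁ / n₁ > S₂ / n₂) (hdom₂ : n₁ < n₂) :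
    ν S₂ n₂ ≤ ν S₁ n₁ := by
  set c : ℝ := n₂ / n₁ with hc
  have hc1 : 1 ≤ c := (one_le_div hn₁).2 hdom₂.le
  have h1 : ν S₂ n₂ = ν (c * (S₂ * n₁ / n₂)) (c * n₁) := by
    rw [hc]; congr 1 <;> field_simp <;> ring
  have h2 : ν (c * (S₂ * n₁ / n₂)) (c * n₁) ≤ ν (1 * (S₂ * n₁ / n₂)) (1 * n₁) :=
    hscale _ _ hn₁ 1 c one_pos hc1
  have h3 : S₂ * n₁ / n₂ ≤ S₁ := by
    rw [div_le_iff₀ hn₂]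
    have := (div_lt_div_iff₀ hn₂ hn₁).1 hdom₁
    linarith
  calc ν S₂ n₂ ≤ ν (S₂ * n₁ / n₂) n₁ := by rw [h1]; simpa using h2
    _ ≤ ν S₁ n₁ := hmean _ hn₁ _ _ h3
end

section
/- Exponential rewards case: let arm a have Gamma(n_a+1, Σ_a) prior on its rate θ_a, so the predictive mean reward is μ_a = Σ_a/n_a, and Ω = [0,∞). Suppose arm 1 dominates arm 2 (μ₁ > μ₂, n₁ < n₂). If Σ₁/(n₁+1) ≥ Σ₂/n₂ then the KG learning value of arm 1 is zero: for every possible reward y ≥ 0 on arm 1, (Σ₁+y)/(n₁+1) ≥ Σ₂/n₂, so max((Σ₁+y)/(n₁+1), Σ₂/n₂) = (Σ₁+y)/(n₁+1) and E[max(μ₁⁺, μ₂)] - μ₁ = 0. -/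
open MeasureTheory

lemma le_add_div_of_le_div {a c d y : ℝ} (hd : 0 < d) (hy : 0 ≤ y) (h : c ≤ a / d) :
    c ≤ (a + y) / d :=
  h.trans (div_le_div_of_nonneg_right (le_add_of_nonneg_right hy) hd.le)

section Integral

variable {Ω : Type*} [MeasurableSpace Ω] {μ : Measure Ω}

lemma integral_max_const_of_ae_le {f : Ω → ℝ} {c : ℝ} (h : ∀ᵐ ω ∂μ, c ≤ f ω) :
    ∫ ω, max (f ω) c ∂μ = ∫ ω, f ω ∂μ :=
  integral_congr_ae (h.mono fun _ hω => max_eq_left hω)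

lemma integral_const_add_div [IsProbabilityMeasure μ] {Y : Ω → ℝ} (hY : Integrable Y μ)
    (a d : ℝ) : ∫ ω, (a + Y ω) / d ∂μ = (a + ∫ ω, Y ω ∂μ) / d := by
  rw [integral_div, integral_add (integrable_const a) hY, integral_const, probReal_univ,
    one_smul]

end Integral

-- Averaging the posterior mean over a reward of mean `S / n`: it is the current mean again.
lemma add_div_div_add_one {S n : ℝ} (hn : 0 < n) : (S + S / n) / (n + 1) = S / n := by
  field_simp

theorem exponential_kg_value_zero_general
    {Ω : Type*} [MeasurableSpace Ω] (μ : Measure Ω) [IsProbabilityMeasure μ]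
    (S₁ n₁ S₂ n₂ : ℝ) (hn₁ : 0 < n₁)
    (hcond : S₁ / (n₁ + 1) ≥ S₂ / n₂)
    (Y : Ω → ℝ) (hYint : Integrable Y μ) (hYpos : ∀ᵐ ω ∂μ, 0 ≤ Y ω)
    (hYmean : ∫ ω, Y ω ∂μ = S₁ / n₁) :
    (∀ y : ℝ, 0 ≤ y →
      (S₁ + y) / (n₁ + 1) ≥ S₂ / n₂ ∧
      max ((S₁ + y) / (n₁ + 1)) (S₂ / n₂) = (S₁ + y) / (n₁ + 1)) ∧
    (∫ ω, max ((S₁ + Y ω) / (n₁ + 1)) (S₂ / n₂) ∂μ) - S₁ / n₁ = 0 := by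
  have hdom : ∀ y : ℝ, 0 ≤ y → S₂ / n₂ ≤ (S₁ + y) / (n₁ + 1) :=
    fun _ hy => le_add_div_of_le_div (by linarith) hy hcond
  refine ⟨fun y hy => ⟨hdom y hy, max_eq_left (hdom y hy)⟩, ?_⟩
  rw [integral_max_const_of_ae_le (f := fun ω => (S₁ + Y ω) / (n₁ + 1))
      (hYpos.mono fun ω => hdom (Y ω)),
    integral_const_add_div hYint, hYmean, add_div_div_add_one hn₁, sub_self]

theorem exponential_kg_value_zero
    {Ω : Type*} [MeasurableSpace Ω] (μ : Measure Ω) [IsProbabilityMeasure μ]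
    (S₁ n₁ S₂ n₂ : ℝ) (hS₁ : 0 < S₁) (hn₁ : 0 < n₁) (hS₂ : 0 < S₂) (hn₂ : 0 < n₂)
    (hdom₁ : S₁ / n₁ > S₂ / n₂) (hdom₂ : n₁ < n₂)
    (hcond : S₁ / (n₁ + 1) ≥ S₂ / n₂)
    (Y : Ω → ℝ) (hYint : Integrable Y μ) (hYpos : ∀ᵐ ω ∂μ, 0 ≤ Y ω)
    (hYmean : ∫ ω, Y ω ∂μ = S₁ / n₁) :
    (∀ y : ℝ, 0 ≤ y →
      (S₁ + y) / (n₁ + 1) ≥ S₂ / n₂ ∧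
      max ((S₁ + y) / (n₁ + 1)) (S₂ / n₂) = (S₁ + y) / (n₁ + 1)) ∧
    (∫ ω, max ((S₁ + Y ω) / (n₁ + 1)) (S₂ / n₂) ∂μ) - S₁ / n₁ = 0 :=
  exponential_kg_value_zero_general μ S₁ n₁ S₂ n₂ hn₁ hcond Y hYint hYpos hYmean
end

section
/- With notation as above but a ∉ argmax_b μ_b (so max_b μ_b = C_a), and Ω bounded above by max Ω: E[max(μ_a⁺, C_a)] = C_a if and only if (Σ_a + max Ω)/(n_a+1) ≤ C_a. -/
open MeasureTheory

theorem kg_value_zero_iff_nongreedy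
    {Ω : Type*} [MeasurableSpace Ω] (μ : Measure Ω) [IsProbabilityMeasure μ]
    (Sa na Ca hi : ℝ) (hna : 0 < na)
    (hnongreedy : Sa / na ≤ Ca)
    (Y : Ω → ℝ) (hYint : Integrable Y μ)
    (hYub : ∀ᵐ ω ∂μ, Y ω ≤ hi)
    (hYsup : ∀ ε : ℝ, 0 < ε → 0 < μ {ω | hi - ε < Y ω})
    (hYmean : ∫ ω, Y ω ∂μ = Sa / na) :
    (∫ ω, max ((Sa + Y ω) / (na + 1)) Ca ∂μ) = Ca ↔
      (Sa + hi) / (na + 1) ≤ Ca := by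
  have hna1 : (0 : ℝ) < na + 1 := by linarith
  have hg_int : Integrable (fun ω => max ((Sa + Y ω) / (na + 1)) Ca) μ := by
    have h1 : Integrable (fun ω => (Sa + Y ω) / (na + 1)) μ :=
      ((integrable_const Sa).add hYint).div_const _
    exact h1.sup (integrable_const Ca)
  constructor
  · intro hint
    by_contra hlt
    push_neg at hlt
    rw [lt_div_iff₀ hna1] at hlt
    set t : ℝ := Ca * (na + 1) - Sa with ht
    have htlt : t < hi := by linarith
    have hεpos : 0 < hi - t := by linarith
    have hpos := hYsup (hi - t) hεpos
    have hset : {ω | hi - (hi - t) < Y ω} = {ω | t < Y ω} := by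
      ext ω; simp
    rw [hset] at hpos
    -- show a.e. max = Ca, hence Y ≤ t a.e.
    have hzero : ∫ ω, (max ((Sa + Y ω) / (na + 1)) Ca - Ca) ∂μ = 0 := by
      rw [integral_sub hg_int (integrable_const Ca), hint, integral_const]
      simp
    have hnonneg : 0 ≤ᵐ[μ] fun ω => max ((Sa + Y ω) / (na + 1)) Ca - Ca := by
      filter_upwards with ω
      simp [le_max_right]
    have hae : (fun ω => max ((Sa + Y ω) / (na + 1)) Ca - Ca) =ᵐ[μ] 0 :=
      (integral_eq_zero_iff_of_nonneg_ae hnonneg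
        (hg_int.sub (integrable_const Ca))).mp hzero
    have hYle : ∀ᵐ ω ∂μ, Y ω ≤ t := by
      filter_upwards [hae] with ω hω
      have hmax : max ((Sa + Y ω) / (na + 1)) Ca = Ca := by
        have : max ((Sa + Y ω) / (na + 1)) Ca - Ca = 0 := hω
        linarith
      have hle : (Sa + Y ω) / (na + 1) ≤ Ca := by
        by_contra h
        push_neg at h
        rw [max_eq_left h.le] at hmax
        linarith
      rw [div_le_iff₀ hna1] at hle
      simp only [ht]
      linarith
    rw [ae_iff] at hYle
    have : {ω | ¬ Y ω ≤ t} = {ω | t < Y ω} := by ext ω; simp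
    rw [this] at hYle
    exact absurd hYle (ne_of_gt hpos)
  · intro hle
    have hae : (fun ω => max ((Sa + Y ω) / (na + 1)) Ca) =ᵐ[μ] fun _ => Ca := by
      filter_upwards [hYub] with ω hω
      have h1 : (Sa + Y ω) / (na + 1) ≤ (Sa + hi) / (na + 1) := by
        apply div_le_div_of_nonneg_right (by linarith) hna1.le
      exact max_eq_right (h1.trans hle)
    rw [integral_congr_ae hae, integral_const]
    simp
end
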